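/- Let T̂ be the reference tetrahedron in R^3 with vertices 0, e_1, e_2, e_3, let k ≥ 1 and δ a multi-index with |δ| ≤ k. For each multi-index γ with the box □_γ^δ ⊆ T̂ (the axis-parallel box with opposite corners γ/k and (γ+δ)/k, possibly degenerate), consider the linear functionals q ↦ ∫_{□_γ^δ} q (integration over the box, face, or segment). If a polynomial q of degree ≤ k − |δ| satisfies ∫_{□_γ^δ} q = 0 for all such boxes contained in T̂, then q = 0. -/

import Mathlib

open MeasureTheory
open scoped ENNReal

noncomputable section

/-- The reference tetrahedron `T̂ ⊂ ℝ³` with vertices `0, e₁, e₂, e₃`. -/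
def refTet : Set (EuclideanSpace ℝ (Fin 3)) :=
  {x | (∀ i, 0 ≤ x i) ∧ ∑ i, x i ≤ 1}

/-- The (possibly degenerate) axis-parallel box `□_γ^δ` with opposite corners
`γ/k` and `(γ+δ)/k`. -/
def latticeBox (k : ℕ) (γ δ : Fin 3 → ℕ) : Set (EuclideanSpace ℝ (Fin 3)) :=
  {x | ∀ i, (γ i : ℝ) / k ≤ x i ∧ x i ≤ ((γ i : ℝ) + (δ i : ℝ)) / k}

/-- The standard `t`-simplex `S_t = {z : z_i ≥ 0, ∑ z_i ≤ 1}`. -/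
def stdSimplexSet (t : ℕ) : Set (Fin t → ℝ) :=
  {z | (∀ i, 0 ≤ z i) ∧ ∑ i, z i ≤ 1}

/-- The normalized simplex-product integral `∫_{□_γ^δ} f` over the (possibly
degenerate) box `□_γ^δ`: for `δ = (t,s,m)`, the iterated integral over
`S_t × S_s × S_m` of `f (γ₀/k + (∑z)/k, γ₁/k + (∑w)/k, γ₂/k + (∑y)/k)`. -/
noncomputable def boxIntegral (k : ℕ) (γ δ : Fin 3 → ℕ)
    (f : EuclideanSpace ℝ (Fin 3) → ℝ) : ℝ :=
  ∫ z in stdSimplexSet (δ 0), ∫ w in stdSimplexSet (δ 1), ∫ y in stdSimplexSet (δ 2),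
    f (show EuclideanSpace ℝ (Fin 3) from WithLp.toLp 2
        ![((γ 0 : ℝ) + ∑ i, z i) / k, ((γ 1 : ℝ) + ∑ i, w i) / k,
          ((γ 2 : ℝ) + ∑ i, y i) / k])

/-- Partial derivative in the `i`-th coordinate direction. -/
noncomputable def pder (i : Fin 3) (f : EuclideanSpace ℝ (Fin 3) → ℝ) :
    EuclideanSpace ℝ (Fin 3) → ℝ :=
  fun x => fderiv ℝ f x (EuclideanSpace.single i 1)

/-- The multi-index partial derivative `∂^δ f`. -/
noncomputable def mpderiv (δ : Fin 3 → ℕ) (f : EuclideanSpace ℝ (Fin 3) → ℝ) :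
    EuclideanSpace ℝ (Fin 3) → ℝ :=
  (pder 0)^[δ 0] ((pder 1)^[δ 1] ((pder 2)^[δ 2] f))

/-- The Sobolev seminorm `|v|_{m,p,s}`: the `L^p` norm over `s` of the `m`-th
total derivative of `v`. -/
noncomputable def sobSeminorm (m : ℕ) (p : ℝ≥0∞) (s : Set (EuclideanSpace ℝ (Fin 3)))
    (v : EuclideanSpace ℝ (Fin 3) → ℝ) : ℝ≥0∞ :=
  eLpNorm (fun x => ‖iteratedFDeriv ℝ m v x‖) p (volume.restrict s)

end

namespace Aux

lemma isCompact_simplex (d : ℕ) : IsCompact (stdSimplexSet d) := by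
  apply Metric.isCompact_of_isClosed_isBounded
  · have : stdSimplexSet d =
        (⋂ i, {z : Fin d → ℝ | 0 ≤ z i}) ∩ {z | ∑ i, z i ≤ 1} := by
      ext z; simp [stdSimplexSet, Set.mem_iInter]
    rw [this]
    exact (isClosed_iInter fun i => isClosed_le continuous_const (continuous_apply i)).inter
      (isClosed_le (continuous_finset_sum _ fun i _ => continuous_apply i) continuous_const)
  · apply (Metric.isBounded_closedBall (x := (0 : Fin d → ℝ)) (r := 1)).subset
    intro z hz
    rw [Metric.mem_closedBall]
    refine dist_pi_le_iff (by norm_num) |>.2 fun i => ?_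
    have h1 : z i ≤ 1 := le_trans (Finset.single_le_sum (fun j _ => hz.1 j)
      (Finset.mem_univ i)) hz.2
    rw [Real.dist_eq]
    simp only [Pi.zero_apply, sub_zero]
    rw [abs_le]; exact ⟨by linarith [hz.1 i], h1⟩

lemma volume_simplex_ne_zero (d : ℕ) : volume (stdSimplexSet d) ≠ 0 := by
  have hsub : (Set.pi Set.univ fun _ : Fin d => Set.Ioo (0:ℝ) (1/(d+1))) ⊆ stdSimplexSet d := by
    intro z hz
    simp only [Set.mem_pi, Set.mem_univ, forall_true_left, Set.mem_Ioo] at hz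
    constructor
    · exact fun i => le_of_lt (hz i).1
    · calc ∑ i, z i ≤ ∑ _i : Fin d, (1/(d+1) : ℝ) :=
            Finset.sum_le_sum fun i _ => le_of_lt (hz i).2
        _ = d * (1/(d+1) : ℝ) := by simp [mul_comm]
        _ ≤ 1 := by
            rw [mul_one_div, div_le_one (by positivity)]
            linarith
    
  refine ne_of_gt (lt_of_lt_of_le ?_ (measure_mono hsub))
  rw [MeasureTheory.volume_pi_pi]
  simp only [Real.volume_Ioo, sub_zero, Finset.prod_const, Finset.card_univ,
    Fintype.card_fin]
  refine ENNReal.pow_pos ?_ d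
  simp only [ENNReal.ofReal_pos]
  positivity

lemma integrableOn_simplex {d : ℕ} {f : (Fin d → ℝ) → ℝ} (hf : Continuous f) :
    IntegrableOn f (stdSimplexSet d) := by
  exact hf.continuousOn.integrableOn_compact (isCompact_simplex d)

/-- moments of the coordinate-sum over the simplex -/
noncomputable def mom (d a : ℕ) : ℝ := ∫ u in stdSimplexSet d, (∑ i, u i) ^ a

lemma mom_zero_pos (d : ℕ) : 0 < mom d 0 := by
  have : mom d 0 = (volume (stdSimplexSet d)).toReal := by
    simp [mom, MeasureTheory.setIntegral_const, measureReal_def]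
  rw [this]
  exact ENNReal.toReal_pos (volume_simplex_ne_zero d)
    ((isCompact_simplex d).measure_lt_top).ne

lemma cont_sum_pow (d b : ℕ) : Continuous fun u : Fin d → ℝ => (∑ i, u i) ^ b :=
  (continuous_finset_sum _ fun i _ => continuous_apply i).pow b

lemma cont_base (k d : ℕ) (g : ℝ) (a : ℕ) :
    Continuous fun u : Fin d → ℝ => ((g + ∑ i, u i) / (k:ℝ)) ^ a :=
  (((continuous_const.add (continuous_finset_sum _ fun i _ => continuous_apply i)).div_const
    _).pow _)

/-- the smoothed power function -/
noncomputable def Jfun (k d : ℕ) (g : ℝ) (a : ℕ) : ℝ :=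
  ∫ u in stdSimplexSet d, ((g + ∑ i, u i) / (k:ℝ)) ^ a

lemma Jfun_eq (k d : ℕ) (g : ℝ) (a : ℕ) :
    Jfun k d g a
      = ∑ j ∈ Finset.range (a+1), ((a.choose j : ℝ) * mom d (a-j) / (k:ℝ)^a) * g^j := by
  unfold Jfun
  have h1 : ∀ u : Fin d → ℝ, ((g + ∑ i, u i)/(k:ℝ))^a
      = ∑ j ∈ Finset.range (a+1),
          (g^j * (a.choose j : ℝ) / (k:ℝ)^a) * (∑ i, u i)^(a-j) := by
    intro u
    rw [div_pow, add_pow, Finset.sum_div]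
    exact Finset.sum_congr rfl fun j _ => by ring
  simp_rw [h1]
  rw [MeasureTheory.integral_finset_sum _
    (fun j _ => integrableOn_simplex (f := fun u => g ^ j * ↑(a.choose j) / ↑k ^ a * (∑ i, u i) ^ (a - j)) (continuous_const.mul (cont_sum_pow d (a-j))))]
  refine Finset.sum_congr rfl fun j hj => ?_
  rw [MeasureTheory.integral_const_mul]
  unfold mom
  ring

lemma integral_sum_pow {ι : Type*} (k d : ℕ) (g : ℝ) (s : Finset ι) (c : ι → ℝ) (e : ι → ℕ) :
    (∫ u in stdSimplexSet d, ∑ α ∈ s, c α * ((g + ∑ i, u i)/(k:ℝ)) ^ e α)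
      = ∑ α ∈ s, c α * Jfun k d g (e α) := by
  rw [MeasureTheory.integral_finset_sum _
    (fun α _ => integrableOn_simplex (d := d) (f := fun u => c α * ((g + ∑ i, u i) / (k:ℝ)) ^ e α) (continuous_const.mul (cont_base k d g (e α))))]
  exact Finset.sum_congr rfl fun α _ => MeasureTheory.integral_const_mul _ _

end Aux

namespace Aux
open MvPolynomial

lemma eval_aeval {σ τ : Type*} (x : σ → ℝ) (g : τ → MvPolynomial σ ℝ)
    (p : MvPolynomial τ ℝ) :
    eval x (aeval g p) = eval (fun i => eval x (g i)) p := by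
  induction p using MvPolynomial.induction_on with
  | C a => simp
  | add p q hp hq => simp only [map_add, hp, hq]
  | mul_X p i hp => simp only [map_mul, aeval_X, eval_mul, eval_X, hp]

lemma totalDegree_aeval_le {σ τ : Type*} (g : τ → MvPolynomial σ ℝ)
    (hg : ∀ i, (g i).totalDegree ≤ 1) (p : MvPolynomial τ ℝ) :
    (aeval g p).totalDegree ≤ p.totalDegree := by
  conv_lhs => rw [p.as_sum]
  rw [map_sum]
  refine (totalDegree_finset_sum _ _).trans ?_
  apply Finset.sup_le
  intro d hd
  rw [aeval_monomial]
  refine (totalDegree_mul _ _).trans ?_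
  have h1 : (algebraMap ℝ (MvPolynomial σ ℝ) (coeff d p)).totalDegree = 0 :=
    totalDegree_C _
  rw [h1, zero_add]
  have h2 : (d.prod fun i k => g i ^ k).totalDegree ≤ d.sum fun _ e => e := by
    rw [Finsupp.prod]
    refine (totalDegree_finset_prod _ _).trans ?_
    rw [Finsupp.sum]
    apply Finset.sum_le_sum
    intro i hi
    exact (totalDegree_pow _ _).trans (by
      calc d i * (g i).totalDegree ≤ d i * 1 := Nat.mul_le_mul_left _ (hg i)
        _ = d i := Nat.mul_one _)
  exact h2.trans (le_totalDegree hd)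

lemma latticeZero (m : ℕ) : ∀ (n : ℕ) (P : MvPolynomial (Fin m) ℝ), P.totalDegree ≤ n →
    (∀ γ : Fin m → ℕ, (∑ i, γ i) ≤ n → eval (fun i => (γ i : ℝ)) P = 0) → P = 0 := by
  induction m with
  | zero =>
    intro n P _ hv
    obtain ⟨c, rfl⟩ := C_surjective (Fin 0) P
    have := hv (fun _ => 0) (by simp)
    simpa using this
  | succ m ihm =>
    intro n
    induction n with
    | zero =>
      intro P hdeg hv
      have h0 : P.totalDegree = 0 := Nat.le_zero.mp hdeg
      have hP : P = C (coeff 0 P) := by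
        ext d
        by_cases hd : d = 0
        · subst hd; simp
        · rw [coeff_C, if_neg (Ne.symm hd)]
          by_contra hne
          have hds : d ∈ P.support := mem_support_iff.2 hne
          have hall := (totalDegree_eq_zero_iff _ P).1 h0 d hds
          exact hd (Finsupp.ext fun i => hall i)
      have hz := hv (fun _ => 0) (by simp)
      rw [hP] at hz ⊢
      simpa using hz
    | succ n ihn =>
      intro P hdeg hv
      set P' := finSuccEquiv ℝ m P with hP'
      have hQ : P'.coeff 0 = 0 := by
        by_cases h : P'.coeff 0 = 0
        · exact h
        · refine ihm (n+1) _ ?_ ?_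
          · have := totalDegree_coeff_finSuccEquiv_add_le P 0 h
            rw [add_zero] at this
            exact this.trans hdeg
          · intro γ' hγ'
            have hz := hv (Fin.cons 0 γ') (by rw [Fin.sum_cons]; simpa)
            have hfun : (fun i => ((Fin.cons 0 γ' : Fin (m+1) → ℕ) i : ℝ))
                = Fin.cons (0:ℝ) (fun i => (γ' i : ℝ)) := by
              funext i
              refine Fin.cases ?_ ?_ i <;> simp
            rw [hfun, eval_eq_eval_mv_eval'] at hz
            rwa [← Polynomial.coeff_zero_eq_eval_zero, Polynomial.coeff_map] at hz
      set R : MvPolynomial (Fin (m+1)) ℝ := (finSuccEquiv ℝ m).symm P'.divX with hR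
      have hPxR : P = X 0 * R := by
        apply (finSuccEquiv ℝ m).injective
        rw [map_mul, finSuccEquiv_X_zero, hR, AlgEquiv.apply_symm_apply]
        conv_lhs => rw [← hP', ← Polynomial.X_mul_divX_add P', hQ, map_zero, add_zero]
      by_cases hRz : R = 0
      · rw [hPxR, hRz, mul_zero]
      have hdegR : R.totalDegree ≤ n := by
        have hne : R.support.Nonempty := support_nonempty.2 hRz
        obtain ⟨d, hd, hdsum⟩ := Finset.exists_mem_eq_sup R.support hne
          (fun s => s.sum fun _ e => e)
        have hco : coeff (Finsupp.single 0 1 + d) P ≠ 0 := by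
          rw [hPxR, coeff_X_mul]
          exact mem_support_iff.1 hd
        have hle := le_totalDegree (mem_support_iff.2 hco)
        rw [Finsupp.sum_add_index' (fun _ => rfl) (fun _ _ _ => rfl),
          Finsupp.sum_single_index rfl] at hle
        have : R.totalDegree = d.sum fun _ e => e := hdsum
        omega
      set subst : Fin (m+1) → MvPolynomial (Fin (m+1)) ℝ :=
        Function.update X 0 (X 0 + 1) with hsubst
      have hsub1 : ∀ i, (subst i).totalDegree ≤ 1 := by
        intro i
        by_cases hi : i = 0
        · subst hi
          rw [hsubst, Function.update_self]
          refine (totalDegree_add _ _).trans ?_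
          simp [totalDegree_X, totalDegree_one]
        · rw [hsubst, Function.update_of_ne hi]
          exact le_of_eq (totalDegree_X i)
      set R' := aeval subst R with hR'
      have hdegR' : R'.totalDegree ≤ n :=
        (totalDegree_aeval_le subst hsub1 R).trans hdegR
      have hvR' : ∀ γ : Fin (m+1) → ℕ, (∑ i, γ i) ≤ n →
          eval (fun i => (γ i : ℝ)) R' = 0 := by
        intro γ hγ
        rw [hR', eval_aeval]
        set γ' : Fin (m+1) → ℕ := Function.update γ 0 (γ 0 + 1) with hγ'
        have hpt : (fun i => eval (fun j => (γ j : ℝ)) (subst i))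
            = fun i => (γ' i : ℝ) := by
          funext i
          by_cases hi : i = 0
          · subst hi
            rw [hsubst, hγ', Function.update_self, Function.update_self]
            push_cast
            simp
          · rw [hsubst, hγ', Function.update_of_ne hi, Function.update_of_ne hi, eval_X]
        rw [hpt]
        have hsumγ' : (∑ i, γ' i) = (∑ i, γ i) + 1 := by
          have : ∀ i, γ' i = γ i + (if i = 0 then 1 else 0) := by
            intro i
            by_cases hi : i = 0
            · subst hi; simp [hγ']
            · simp [hγ', Function.update_of_ne hi, hi]
          simp only [this]
          rw [Finset.sum_add_distrib]
          congr 1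
          simp
        have hPz := hv γ' (by omega)
        rw [hPxR, eval_mul, eval_X] at hPz
        have hne0 : ((γ' 0 : ℝ)) ≠ 0 := by
          rw [hγ', Function.update_self]
          positivity
        exact (mul_eq_zero.1 hPz).resolve_left hne0
      have hR'z : R' = 0 := ihn R' hdegR' hvR'
      have hRzz : R = 0 := by
        have hcomp : aeval (Function.update X 0 (X 0 - 1)) R' = R := by
          rw [hR', ← AlgHom.comp_apply, comp_aeval]
          have : (fun i => aeval (Function.update X 0 (X 0 - 1)) (subst i))
              = (X : Fin (m+1) → MvPolynomial (Fin (m+1)) ℝ) := by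
            funext i
            by_cases hi : i = 0
            · subst hi
              rw [hsubst, Function.update_self]
              rw [map_add, aeval_X, Function.update_self, map_one]
              ring
            · rw [hsubst, Function.update_of_ne hi, aeval_X, Function.update_of_ne hi]
          rw [this, aeval_X_left_apply]
        rw [hR'z, map_zero] at hcomp
        exact hcomp.symm
      rw [hPxR, hRzz, mul_zero]

end Aux

namespace Aux
open MvPolynomial

/-- the per-variable smoothed power polynomial -/
noncomputable def Pm (k : ℕ) (δ : Fin 3 → ℕ) (i : Fin 3) (a : ℕ) :
    MvPolynomial (Fin 3) ℝ :=
  ∑ j ∈ Finset.range (a+1),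
    monomial (Finsupp.single i j) ((a.choose j : ℝ) * mom (δ i) (a-j) / (k:ℝ)^a)

lemma eval_Pm (k : ℕ) (δ : Fin 3 → ℕ) (i : Fin 3) (a : ℕ) (x : Fin 3 → ℝ) :
    eval x (Pm k δ i a) = Jfun k (δ i) (x i) a := by
  rw [Jfun_eq, Pm, map_sum]
  refine Finset.sum_congr rfl fun j hj => ?_
  rw [eval_monomial]
  simp [Finsupp.prod_single_index]

lemma coeff_Pm_eq_zero (k : ℕ) (δ : Fin 3 → ℕ) (i : Fin 3) (a : ℕ) (d : Fin 3 →₀ ℕ)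
    (hd : ∃ j, j ≠ i ∧ d j ≠ 0) : coeff d (Pm k δ i a) = 0 := by
  rw [Pm, coeff_sum]
  apply Finset.sum_eq_zero
  intro j' _
  rw [coeff_monomial, if_neg]
  obtain ⟨j, hji, hdj⟩ := hd
  intro h
  apply hdj
  rw [← h, Finsupp.single_apply, if_neg (Ne.symm hji)]

lemma Pm_support (k : ℕ) (δ : Fin 3 → ℕ) (i : Fin 3) (a : ℕ) :
    ∀ d ∈ (Pm k δ i a).support, ∀ j, j ≠ i → d j = 0 := by
  intro d hd j hji
  by_contra h
  exact mem_support_iff.1 hd (coeff_Pm_eq_zero k δ i a d ⟨j, hji, h⟩)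

lemma coeff_single_Pm (k : ℕ) (δ : Fin 3 → ℕ) (i : Fin 3) (a : ℕ) (j' : ℕ) :
    coeff (Finsupp.single i j') (Pm k δ i a)
      = if j' ≤ a then (a.choose j' : ℝ) * mom (δ i) (a - j') / (k:ℝ)^a else 0 := by
  rw [Pm, coeff_sum]
  have hiff : ∀ j : ℕ, (Finsupp.single i j = Finsupp.single i j') ↔ j = j' := by
    intro j
    constructor
    · intro h
      have := DFunLike.congr_fun h i
      simpa using this
    · rintro rfl; rfl
  calc (∑ j ∈ Finset.range (a+1), coeff (Finsupp.single i j')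
          (monomial (Finsupp.single i j) ((a.choose j : ℝ) * mom (δ i) (a-j) / (k:ℝ)^a)))
      = ∑ j ∈ Finset.range (a+1), if j = j' then
          ((a.choose j : ℝ) * mom (δ i) (a-j) / (k:ℝ)^a) else 0 := by
        refine Finset.sum_congr rfl fun j _ => ?_
        rw [coeff_monomial, if_congr (hiff j) rfl rfl]
    _ = if j' ∈ Finset.range (a+1) then
          ((a.choose j' : ℝ) * mom (δ i) (a-j') / (k:ℝ)^a) else 0 :=
        Finset.sum_ite_eq' _ _ _
    _ = _ := by simp only [Finset.mem_range, Nat.lt_succ_iff]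

lemma coeff_mul_split (i : Fin 3) (p r : MvPolynomial (Fin 3) ℝ)
    (hp : ∀ d ∈ p.support, ∀ j, j ≠ i → d j = 0)
    (hr : ∀ d ∈ r.support, d i = 0) (α : Fin 3 →₀ ℕ) :
    coeff α (p * r) = coeff (Finsupp.single i (α i)) p * coeff (α.erase i) r := by
  classical
  rw [coeff_mul]
  have hmem : (Finsupp.single i (α i), α.erase i) ∈ Finset.HasAntidiagonal.antidiagonal α := by
    rw [Finset.HasAntidiagonal.mem_antidiagonal]
    exact Finsupp.single_add_erase i α
  rw [Finset.sum_eq_single_of_mem _ hmem]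
  intro b hb hne
  by_cases h1 : b.1 ∈ p.support
  · by_cases h2 : b.2 ∈ r.support
    · exfalso
      apply hne
      rw [Finset.HasAntidiagonal.mem_antidiagonal] at hb
      have hb1 : b.1 = Finsupp.single i (α i) := by
        ext j
        by_cases hj : j = i
        · subst hj
          rw [Finsupp.single_eq_same]
          have hαj := DFunLike.congr_fun hb j
          simp only [Finsupp.add_apply] at hαj
          have h2j := hr b.2 h2
          omega
        · rw [hp b.1 h1 j hj, Finsupp.single_apply, if_neg (Ne.symm hj)]
      have hb2 : b.2 = α.erase i := by
        ext j
        by_cases hj : j = i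
        · subst hj
          rw [Finsupp.erase_same, hr b.2 h2]
        · have hαj := DFunLike.congr_fun hb j
          simp only [Finsupp.add_apply] at hαj
          rw [Finsupp.erase_ne hj, ← hαj, hp b.1 h1 j hj, zero_add]
      exact Prod.ext hb1 hb2
    · rw [notMem_support_iff.1 h2, mul_zero]
  · rw [notMem_support_iff.1 h1, zero_mul]

lemma coeff_prod_Pm (k : ℕ) (δ : Fin 3 → ℕ) (β : Fin 3 → ℕ) (α : Fin 3 →₀ ℕ) :
    coeff α (Pm k δ 0 (β 0) * (Pm k δ 1 (β 1) * Pm k δ 2 (β 2)))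
      = ∏ i, coeff (Finsupp.single i (α i)) (Pm k δ i (β i)) := by
  classical
  have hsupp12 : ∀ d ∈ (Pm k δ 1 (β 1) * Pm k δ 2 (β 2)).support, d 0 = 0 := by
    intro d hd
    obtain ⟨d1, hd1, d2, hd2, rfl⟩ := Finset.mem_add.1 (support_mul _ _ hd)
    have h1 := Pm_support k δ 1 (β 1) d1 hd1 0 (by decide)
    have h2 := Pm_support k δ 2 (β 2) d2 hd2 0 (by decide)
    simp [Finsupp.add_apply, h1, h2]
  rw [coeff_mul_split 0 _ _ (Pm_support k δ 0 (β 0)) hsupp12 α]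
  rw [coeff_mul_split 1 _ _ (Pm_support k δ 1 (β 1))
    (fun d hd => Pm_support k δ 2 (β 2) d hd 1 (by decide)) _]
  have he1 : (α.erase 0) 1 = α 1 := Finsupp.erase_ne (by decide)
  have he2 : (α.erase 0).erase 1 = Finsupp.single 2 (α 2) := by
    ext j
    fin_cases j <;>
      simp [Finsupp.erase_same, Finsupp.erase_ne, Finsupp.single_apply]
  rw [he1, he2, Fin.prod_univ_three]
  ring

lemma totalDegree_Pm_le (k : ℕ) (δ : Fin 3 → ℕ) (i : Fin 3) (a : ℕ) :
    (Pm k δ i a).totalDegree ≤ a := by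
  refine (totalDegree_finset_sum _ _).trans ?_
  apply Finset.sup_le
  intro j hj
  refine (totalDegree_monomial_le _ _).trans ?_
  rw [Finsupp.sum_single_index rfl]
  exact Nat.lt_succ_iff.1 (Finset.mem_range.1 hj)

end Aux

open MvPolynomial Aux in
/-- If a polynomial `q` of total degree `≤ k − |δ|` has vanishing integral over
every (possibly degenerate) lattice box `□_γ^δ` contained in the reference
tetrahedron `T̂`, then `q = 0`. -/
theorem stmt_14 (k : ℕ) (hk : 1 ≤ k) (δ : Fin 3 → ℕ) (hδ : ∑ i, δ i ≤ k)
    (q : MvPolynomial (Fin 3) ℝ) (hdeg : q.totalDegree ≤ k - ∑ i, δ i)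
    (hvanish : ∀ γ : Fin 3 → ℕ, latticeBox k γ δ ⊆ refTet →
      boxIntegral k γ δ (fun x => MvPolynomial.eval (fun i => x i) q) = 0) :
    q = 0 := by
  classical
  set n := k - ∑ i, δ i with hn
  have hkpos : (0:ℝ) < (k:ℝ) := by exact_mod_cast hk
  -- evaluation of q at a point written as a vector
  have hev : ∀ u v y : ℝ,
      MvPolynomial.eval (fun i => (WithLp.toLp 2 ![u, v, y] : EuclideanSpace ℝ (Fin 3)) i) q
        = ∑ α ∈ q.support, MvPolynomial.coeff α q *
            (u ^ α 0 * (v ^ α 1 * y ^ α 2)) := by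
    intro u v y
    conv_lhs => rw [q.as_sum]
    rw [map_sum]
    refine Finset.sum_congr rfl fun α hα => ?_
    rw [eval_monomial, Finsupp.prod_fintype _ _ (fun i => pow_zero _), Fin.prod_univ_three]
    simp only [PiLp.toLp_apply, Matrix.cons_val_zero, Matrix.cons_val_one, Matrix.head_cons,
      Matrix.cons_val_two, Matrix.tail_cons]
    ring
  -- the box integral as a sum of products of smoothed powers
  have hbox : ∀ γ : Fin 3 → ℕ,
      boxIntegral k γ δ (fun x => MvPolynomial.eval (fun i => x i) q)
        = ∑ α ∈ q.support, MvPolynomial.coeff α q *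
            (Jfun k (δ 0) (γ 0 : ℝ) (α 0) *
              (Jfun k (δ 1) (γ 1 : ℝ) (α 1) * Jfun k (δ 2) (γ 2 : ℝ) (α 2))) := by
    intro γ
    have step2 : ∀ u v : ℝ,
        (∫ y in stdSimplexSet (δ 2), MvPolynomial.eval
            (fun i => (WithLp.toLp 2 ![u, v, ((γ 2 : ℝ) + ∑ i, y i)/(k:ℝ)] : EuclideanSpace ℝ (Fin 3)) i) q)
          = ∑ α ∈ q.support, (MvPolynomial.coeff α q * u ^ α 0 * v ^ α 1) *
              Jfun k (δ 2) (γ 2 : ℝ) (α 2) := by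
      intro u v
      have h1 : ∀ y : Fin (δ 2) → ℝ,
          MvPolynomial.eval
            (fun i => (WithLp.toLp 2 ![u, v, ((γ 2 : ℝ) + ∑ i, y i)/(k:ℝ)] : EuclideanSpace ℝ (Fin 3)) i) q
          = ∑ α ∈ q.support, (MvPolynomial.coeff α q * u ^ α 0 * v ^ α 1) *
              (((γ 2 : ℝ) + ∑ i, y i)/(k:ℝ)) ^ α 2 := by
        intro y
        rw [hev]
        exact Finset.sum_congr rfl fun α _ => by ring
      simp only [h1]
      exact integral_sum_pow k (δ 2) _ q.support _ _
    have step1 : ∀ u : ℝ,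
        (∫ w in stdSimplexSet (δ 1), ∑ α ∈ q.support,
            (MvPolynomial.coeff α q * u ^ α 0 * (((γ 1 : ℝ) + ∑ i, w i)/(k:ℝ)) ^ α 1) *
              Jfun k (δ 2) (γ 2 : ℝ) (α 2))
          = ∑ α ∈ q.support,
              (MvPolynomial.coeff α q * u ^ α 0 * Jfun k (δ 2) (γ 2 : ℝ) (α 2)) *
                Jfun k (δ 1) (γ 1 : ℝ) (α 1) := by
      intro u
      have h1 : ∀ w : Fin (δ 1) → ℝ,
          (∑ α ∈ q.support,
            (MvPolynomial.coeff α q * u ^ α 0 * (((γ 1 : ℝ) + ∑ i, w i)/(k:ℝ)) ^ α 1) *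
              Jfun k (δ 2) (γ 2 : ℝ) (α 2))
          = ∑ α ∈ q.support,
              (MvPolynomial.coeff α q * u ^ α 0 * Jfun k (δ 2) (γ 2 : ℝ) (α 2)) *
                (((γ 1 : ℝ) + ∑ i, w i)/(k:ℝ)) ^ α 1 :=
        fun w => Finset.sum_congr rfl fun α _ => by ring
      simp only [h1]
      exact integral_sum_pow k (δ 1) _ q.support _ _
    have step0 :
        (∫ z in stdSimplexSet (δ 0), ∑ α ∈ q.support,
            (MvPolynomial.coeff α q * (((γ 0 : ℝ) + ∑ i, z i)/(k:ℝ)) ^ α 0 *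
              Jfun k (δ 2) (γ 2 : ℝ) (α 2)) * Jfun k (δ 1) (γ 1 : ℝ) (α 1))
          = ∑ α ∈ q.support,
              (MvPolynomial.coeff α q * Jfun k (δ 2) (γ 2 : ℝ) (α 2) *
                Jfun k (δ 1) (γ 1 : ℝ) (α 1)) * Jfun k (δ 0) (γ 0 : ℝ) (α 0) := by
      have h1 : ∀ z : Fin (δ 0) → ℝ,
          (∑ α ∈ q.support,
            (MvPolynomial.coeff α q * (((γ 0 : ℝ) + ∑ i, z i)/(k:ℝ)) ^ α 0 *
              Jfun k (δ 2) (γ 2 : ℝ) (α 2)) * Jfun k (δ 1) (γ 1 : ℝ) (α 1))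
          = ∑ α ∈ q.support,
              (MvPolynomial.coeff α q * Jfun k (δ 2) (γ 2 : ℝ) (α 2) *
                Jfun k (δ 1) (γ 1 : ℝ) (α 1)) *
                (((γ 0 : ℝ) + ∑ i, z i)/(k:ℝ)) ^ α 0 :=
        fun z => Finset.sum_congr rfl fun α _ => by ring
      simp only [h1]
      exact integral_sum_pow k (δ 0) _ q.support _ _
    calc boxIntegral k γ δ (fun x => MvPolynomial.eval (fun i => x i) q)
        = ∫ z in stdSimplexSet (δ 0), ∫ w in stdSimplexSet (δ 1),
            ∑ α ∈ q.support,
              (MvPolynomial.coeff α q * (((γ 0 : ℝ) + ∑ i, z i)/(k:ℝ)) ^ α 0 *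
                (((γ 1 : ℝ) + ∑ i, w i)/(k:ℝ)) ^ α 1) * Jfun k (δ 2) (γ 2 : ℝ) (α 2) := by
          refine congrArg (MeasureTheory.integral _) (funext fun z => ?_)
          refine congrArg (MeasureTheory.integral _) (funext fun w => ?_)
          exact step2 _ _
      _ = ∫ z in stdSimplexSet (δ 0), ∑ α ∈ q.support,
            (MvPolynomial.coeff α q * (((γ 0 : ℝ) + ∑ i, z i)/(k:ℝ)) ^ α 0 *
              Jfun k (δ 2) (γ 2 : ℝ) (α 2)) * Jfun k (δ 1) (γ 1 : ℝ) (α 1) := by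
          refine congrArg (MeasureTheory.integral _) (funext fun z => ?_)
          exact step1 _
      _ = ∑ α ∈ q.support,
            (MvPolynomial.coeff α q * Jfun k (δ 2) (γ 2 : ℝ) (α 2) *
              Jfun k (δ 1) (γ 1 : ℝ) (α 1)) * Jfun k (δ 0) (γ 0 : ℝ) (α 0) := step0
      _ = _ := Finset.sum_congr rfl fun α _ => by ring
  -- boxes over the lattice simplex are inside the tetrahedron
  have hsubset : ∀ γ : Fin 3 → ℕ, (∑ i, γ i) ≤ n → latticeBox k γ δ ⊆ refTet := by
    intro γ hγ x hx
    have hsums : (∑ i, γ i) + (∑ i, δ i) ≤ k := by omega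
    constructor
    · intro i
      exact le_trans (by positivity) (hx i).1
    · calc ∑ i, x i ≤ ∑ i, ((γ i : ℝ) + (δ i : ℝ))/(k:ℝ) :=
            Finset.sum_le_sum fun i _ => (hx i).2
        _ = (∑ i, ((γ i : ℝ) + (δ i : ℝ)))/(k:ℝ) := by rw [Finset.sum_div]
        _ ≤ 1 := by
            rw [div_le_one hkpos]
            have : (∑ i, ((γ i : ℝ) + (δ i : ℝ)))
                = (((∑ i, γ i) + (∑ i, δ i) : ℕ) : ℝ) := by
              push_cast
              rw [Finset.sum_add_distrib]
            rw [this]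
            exact_mod_cast hsums
  -- the transformed polynomial
  set T : MvPolynomial (Fin 3) ℝ := ∑ α ∈ q.support,
      MvPolynomial.C (MvPolynomial.coeff α q) *
        (Pm k δ 0 (α 0) * (Pm k δ 1 (α 1) * Pm k δ 2 (α 2))) with hT
  have hevalT : ∀ x : Fin 3 → ℝ, MvPolynomial.eval x T
      = ∑ α ∈ q.support, MvPolynomial.coeff α q *
          (Jfun k (δ 0) (x 0) (α 0) *
            (Jfun k (δ 1) (x 1) (α 1) * Jfun k (δ 2) (x 2) (α 2))) := by
    intro x
    rw [hT, map_sum]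
    refine Finset.sum_congr rfl fun α _ => ?_
    rw [eval_mul, eval_C, eval_mul, eval_mul, eval_Pm, eval_Pm, eval_Pm]
  have hvanT : ∀ γ : Fin 3 → ℕ, (∑ i, γ i) ≤ n →
      MvPolynomial.eval (fun i => (γ i : ℝ)) T = 0 := by
    intro γ hγ
    rw [hevalT, ← hbox γ]
    exact hvanish γ (hsubset γ hγ)
  have hdegT : T.totalDegree ≤ n := by
    rw [hT]
    refine (totalDegree_finset_sum _ _).trans ?_
    apply Finset.sup_le
    intro α hα
    have h1 : (MvPolynomial.C (MvPolynomial.coeff α q) *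
        (Pm k δ 0 (α 0) * (Pm k δ 1 (α 1) * Pm k δ 2 (α 2)))).totalDegree
        ≤ α 0 + (α 1 + α 2) := by
      refine (totalDegree_mul _ _).trans ?_
      rw [totalDegree_C, zero_add]
      refine (totalDegree_mul _ _).trans ?_
      refine Nat.add_le_add (totalDegree_Pm_le k δ 0 (α 0)) ?_
      refine (totalDegree_mul _ _).trans ?_
      exact Nat.add_le_add (totalDegree_Pm_le k δ 1 (α 1)) (totalDegree_Pm_le k δ 2 (α 2))
    refine h1.trans ?_
    have h2 : α 0 + (α 1 + α 2) = α.sum fun _ e => e := by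
      rw [Finsupp.sum_fintype _ _ (fun i => rfl), Fin.sum_univ_three, add_assoc]
    rw [h2]
    exact (le_totalDegree hα).trans hdeg
  have hT0 : T = 0 := latticeZero 3 n T hdegT hvanT
  -- conclude q = 0 by looking at a maximal monomial
  by_contra hq
  obtain ⟨α, hα, hmax⟩ := Finset.exists_maximal (support_nonempty.2 hq)
  have hcoeff : MvPolynomial.coeff α T
      = MvPolynomial.coeff α q * ∏ i, (mom (δ i) 0 / (k:ℝ) ^ α i) := by
    rw [hT, coeff_sum]
    rw [Finset.sum_eq_single_of_mem α hα]
    · rw [coeff_C_mul]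
      have hc := coeff_prod_Pm k δ (fun i => α i) α
      rw [hc]
      congr 1
      refine Finset.prod_congr rfl fun i _ => ?_
      rw [coeff_single_Pm, if_pos le_rfl, Nat.choose_self, Nat.sub_self, Nat.cast_one, one_mul]
    · intro β hβ hne
      rw [coeff_C_mul]
      have hc := coeff_prod_Pm k δ (fun i => β i) α
      rw [hc]
      have hex : ∃ i, β i < α i := by
        by_contra hno
        push_neg at hno
        have hle : α ≤ β := Finsupp.le_def.2 fun i => hno i
        exact absurd (hmax hβ hle) (not_le_of_gt (lt_of_le_of_ne hle (Ne.symm hne)))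
      obtain ⟨i, hi⟩ := hex
      rw [Finset.prod_eq_zero (Finset.mem_univ i), mul_zero]
      rw [coeff_single_Pm, if_neg (by omega)]
  have hpos : (0:ℝ) < ∏ i, (mom (δ i) 0 / (k:ℝ) ^ α i) := by
    apply Finset.prod_pos
    intro i _
    have := mom_zero_pos (δ i)
    positivity
  have : MvPolynomial.coeff α q = 0 := by
    have h0 : MvPolynomial.coeff α T = 0 := by rw [hT0]; rfl
    rw [hcoeff] at h0
    exact (mul_eq_zero.1 h0).resolve_right (ne_of_gt hpos)
  exact mem_support_iff.1 hα this
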